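/- Nonlinear Kolmogorov weak law of large numbers, lower bound (claim (5)): under the standing assumptions, and assuming that for each n the truncated variables (Y_{n,k}, 1 ≤ k ≤ n) are pairwise nonlinearly independent, i.e. for all i ≠ k and all functions φ, ψ : ℝ → ℝ satisfying |φ(x) − φ(y)| ≤ C(1 + |x|^m + |y|^m)|x − y| for some C > 0 and m ∈ ℕ (and similarly for ψ) one has 𝔼[φ(Y_{n,k}) ψ(Y_{n,i})] = 𝔼[φ(Y_{n,k})] · 𝔼[ψ(Y_{n,i})], it holds that for every ε > 0, V(S_n/n ≤ μ̲_n − ε) → 0 as n → ∞. -/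

import Mathlib

/-
Truncate at level `n`: on the event that no `|X k|` exceeds `n`, `S n / n ≤ μ̲ n - ε` forces the
centred truncations `Z k = μ⁻ n k - Y n k` to sum to at least `n ε`. Each `Z k` has upper mean
zero, so pairwise nonlinear independence kills the cross terms `𝔼[Z i Z k]` and Chebyshev's
inequality applies under every `P ∈ 𝒫` at once. The layer-cake formula bounds the second moments
of the truncations by the tail capacities, and after the substitution `t = n y` the resulting
bound is `8 / ε² (∫₀¹ ψ n + 2 ψ n 1)`, while the exceptional event has capacity at most `ψ n 1`.
Both vanish: `ψ n 1 → 0` by assumption and `∫₀¹ ψ n → 0` by Vitali's theorem.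
-/

open MeasureTheory Filter

noncomputable def upperExp {Ω : Type*} [MeasurableSpace Ω] (Ps : Set (Measure Ω)) (Z : Ω → ℝ) : ℝ :=
  ⨆ P : Ps, ∫ ω, Z ω ∂(P : Measure Ω)

noncomputable def lowerExp {Ω : Type*} [MeasurableSpace Ω] (Ps : Set (Measure Ω)) (Z : Ω → ℝ) : ℝ :=
  ⨅ P : Ps, ∫ ω, Z ω ∂(P : Measure Ω)

noncomputable def upperCap {Ω : Type*} [MeasurableSpace Ω] (Ps : Set (Measure Ω)) (A : Set Ω) : ℝ :=
  ⨆ P : Ps, ((P : Measure Ω) A).toReal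

noncomputable def lowerCap {Ω : Type*} [MeasurableSpace Ω] (Ps : Set (Measure Ω)) (A : Set Ω) : ℝ :=
  ⨅ P : Ps, ((P : Measure Ω) A).toReal

open Set
open scoped Topology

section UpperExpectation

variable {Ω : Type*} [MeasurableSpace Ω] {Ps : Set (Measure Ω)}

lemma upperCap_nonneg (A : Set Ω) : 0 ≤ upperCap Ps A :=
  Real.iSup_nonneg fun _ => ENNReal.toReal_nonneg

lemma le_upperCap (hprob : ∀ P ∈ Ps, IsProbabilityMeasure P) {P : Measure Ω} (hP : P ∈ Ps)
    (A : Set Ω) : P.real A ≤ upperCap Ps A := by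
  refine le_ciSup (f := fun Q : Ps => (Q : Measure Ω).real A) ⟨1, ?_⟩ ⟨P, hP⟩
  rintro _ ⟨Q, rfl⟩
  have := hprob Q Q.2
  exact measureReal_le_one

lemma upperCap_le (hne : Ps.Nonempty) {A : Set Ω} {c : ℝ} (h : ∀ P ∈ Ps, P.real A ≤ c) :
    upperCap Ps A ≤ c :=
  have := hne.to_subtype
  ciSup_le fun P => h P P.2

lemma upperCap_mono (hprob : ∀ P ∈ Ps, IsProbabilityMeasure P) {A B : Set Ω} (h : A ⊆ B) :
    upperCap Ps A ≤ upperCap Ps B := by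
  refine Real.iSup_le (fun P => ?_) (upperCap_nonneg B)
  have := hprob P P.2
  exact (measureReal_mono h).trans (le_upperCap hprob P.2 B)

lemma upperCap_le_add_sum {ι : Type*} (hprob : ∀ P ∈ Ps, IsProbabilityMeasure P)
    {A B : Set Ω} {s : Finset ι} {C : ι → Set Ω} (h : A ⊆ B ∪ ⋃ k ∈ s, C k) :
    upperCap Ps A ≤ upperCap Ps B + ∑ k ∈ s, upperCap Ps (C k) := by
  refine Real.iSup_le (fun P => ?_)
    (add_nonneg (upperCap_nonneg B) (Finset.sum_nonneg fun k _ => upperCap_nonneg (C k)))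
  have := hprob P P.2
  calc (P : Measure Ω).real A ≤ (P : Measure Ω).real B + ∑ k ∈ s, (P : Measure Ω).real (C k) :=
        (measureReal_mono h).trans <| (measureReal_union_le _ _).trans <|
          add_le_add_right (measureReal_biUnion_finset_le s C) _
    _ ≤ upperCap Ps B + ∑ k ∈ s, upperCap Ps (C k) :=
        add_le_add (le_upperCap hprob P.2 B)
          (Finset.sum_le_sum fun k _ => le_upperCap hprob P.2 (C k))

lemma integral_le_upperExp {f : Ω → ℝ} {c : ℝ} (hc : ∀ Q ∈ Ps, ∫ ω, f ω ∂Q ≤ c)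
    {P : Measure Ω} (hP : P ∈ Ps) : ∫ ω, f ω ∂P ≤ upperExp Ps f := by
  refine le_ciSup (f := fun Q : Ps => ∫ ω, f ω ∂(Q : Measure Ω)) ⟨c, ?_⟩ ⟨P, hP⟩
  rintro _ ⟨Q, rfl⟩
  exact hc Q Q.2

lemma upperExp_const_sub (hne : Ps.Nonempty) (hprob : ∀ P ∈ Ps, IsProbabilityMeasure P)
    {f : Ω → ℝ} (hf : ∀ P ∈ Ps, Integrable f P) {m : ℝ} (hm : ∀ P ∈ Ps, m ≤ ∫ ω, f ω ∂P)
    (c : ℝ) : upperExp Ps (fun ω => c - f ω) = c - lowerExp Ps f := by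
  have := hne.to_subtype
  have hsub : ∀ P : Ps, ∫ ω, c - f ω ∂(P : Measure Ω) = c - ∫ ω, f ω ∂(P : Measure Ω) := by
    intro P
    have := hprob P P.2
    rw [integral_sub (integrable_const c) (hf P P.2), integral_const, probReal_univ, one_smul]
  have hbdd : BddBelow (range fun P : Ps => ∫ ω, f ω ∂(P : Measure Ω)) := by
    refine ⟨m, ?_⟩
    rintro _ ⟨P, rfl⟩
    exact hm P P.2
  simp only [upperExp, lowerExp, hsub]
  refine le_antisymm (ciSup_le fun P => sub_le_sub_left (ciInf_le hbdd P) c) ?_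
  rw [sub_le_comm]
  refine le_ciInf fun P => ?_
  rw [sub_le_comm]
  exact le_ciSup (f := fun P : Ps => c - ∫ ω, f ω ∂(P : Measure Ω))
    ⟨c - m, by rintro _ ⟨Q, rfl⟩; exact sub_le_sub_left (hm Q Q.2) c⟩ P

lemma sq_integral_le_integral_sq {P : Measure Ω} [IsProbabilityMeasure P] {f : Ω → ℝ}
    (hf : MemLp f 2 P) : (∫ ω, f ω ∂P) ^ 2 ≤ ∫ ω, f ω ^ 2 ∂P := by
  have := ProbabilityTheory.variance_nonneg f P
  rwa [ProbabilityTheory.variance_eq_sub hf, sub_nonneg] at this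

lemma sq_lowerExp_le (hne : Ps.Nonempty) (hprob : ∀ P ∈ Ps, IsProbabilityMeasure P)
    {f : Ω → ℝ} (hf : ∀ P ∈ Ps, MemLp f 2 P) {B : ℝ} (hB : ∀ P ∈ Ps, ∫ ω, f ω ^ 2 ∂P ≤ B) :
    lowerExp Ps f ^ 2 ≤ B := by
  have := hne.to_subtype
  obtain ⟨P₀, hP₀⟩ := hne
  have hB0 : 0 ≤ B := (integral_nonneg fun ω => sq_nonneg (f ω)).trans (hB P₀ hP₀)
  have hmean : ∀ P : Ps, -√B ≤ ∫ ω, f ω ∂(P : Measure Ω) ∧ ∫ ω, f ω ∂(P : Measure Ω) ≤ √B := by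
    intro P
    have := hprob P P.2
    exact (Real.sq_le hB0).mp ((sq_integral_le_integral_sq (hf P P.2)).trans (hB P P.2))
  refine (Real.sq_le hB0).mpr ⟨le_ciInf fun P => (hmean P).1, ?_⟩
  exact (ciInf_le ⟨-√B, by rintro _ ⟨P, rfl⟩; exact (hmean P).1⟩ ⟨P₀, hP₀⟩).trans
    (hmean ⟨P₀, hP₀⟩).2

end UpperExpectation

section Chebyshev

variable {Ω ι : Type*} [MeasurableSpace Ω]

lemma measureReal_le_sum_integral_sq_div_sq {P : Measure Ω} [IsFiniteMeasure P] {s : Finset ι}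
    {Z : ι → Ω → ℝ} (hZ : ∀ i ∈ s, ∀ k ∈ s, Integrable (fun ω => Z i ω * Z k ω) P)
    (hcross : ∀ i ∈ s, ∀ k ∈ s, i ≠ k → ∫ ω, Z i ω * Z k ω ∂P ≤ 0) {a : ℝ} (ha : 0 < a) :
    P.real {ω | a ≤ ∑ k ∈ s, Z k ω} ≤ (∑ k ∈ s, ∫ ω, Z k ω ^ 2 ∂P) / a ^ 2 := by
  have hsq : (fun ω => (∑ k ∈ s, Z k ω) ^ 2) = fun ω => ∑ i ∈ s, ∑ k ∈ s, Z i ω * Z k ω := by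
    ext ω
    rw [sq, Finset.sum_mul_sum]
  have hint : Integrable (fun ω => (∑ k ∈ s, Z k ω) ^ 2) P := by
    rw [hsq]
    exact integrable_finsetSum _ fun i hi => integrable_finsetSum _ fun k hk => hZ i hi k hk
  have hdiag : ∀ i ∈ s, ∑ k ∈ s, ∫ ω, Z i ω * Z k ω ∂P ≤ ∫ ω, Z i ω ^ 2 ∂P := by
    intro i hi
    classical
    rw [← Finset.add_sum_erase s _ hi]
    refine add_le_of_le_of_nonpos (by simp only [sq, le_refl]) (Finset.sum_nonpos fun k hk => ?_)
    exact hcross i hi k (Finset.mem_of_mem_erase hk) (Finset.ne_of_mem_erase hk).symm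
  have hmarkov := mul_meas_ge_le_integral_of_nonneg
    (Eventually.of_forall fun ω => sq_nonneg (∑ k ∈ s, Z k ω)) hint (a ^ 2)
  rw [le_div_iff₀ (by positivity), mul_comm]
  calc a ^ 2 * P.real {ω | a ≤ ∑ k ∈ s, Z k ω}
      ≤ a ^ 2 * P.real {ω | a ^ 2 ≤ (∑ k ∈ s, Z k ω) ^ 2} :=
        mul_le_mul_of_nonneg_left
          (measureReal_mono fun ω (hω : a ≤ _) => mem_ofPred.mpr (pow_le_pow_left₀ ha.le hω 2))
          (sq_nonneg a)
    _ ≤ ∫ ω, (∑ k ∈ s, Z k ω) ^ 2 ∂P := hmarkov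
    _ = ∑ i ∈ s, ∑ k ∈ s, ∫ ω, Z i ω * Z k ω ∂P := by
        rw [hsq, integral_finsetSum _ fun i hi =>
          integrable_finsetSum _ fun k hk => hZ i hi k hk]
        exact Finset.sum_congr rfl fun i hi => integral_finsetSum _ fun k hk => hZ i hi k hk
    _ ≤ ∑ i ∈ s, ∫ ω, Z i ω ^ 2 ∂P := Finset.sum_le_sum hdiag

variable {Ps : Set (Measure Ω)}

lemma upperCap_le_sum_div_sq (hne : Ps.Nonempty) (hprob : ∀ P ∈ Ps, IsProbabilityMeasure P)
    {s : Finset ι} {Z : ι → Ω → ℝ} {C : ι → ℝ} (hZ : ∀ k, Measurable (Z k))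
    (hZC : ∀ k ω, |Z k ω| ≤ C k)
    (hcross : ∀ i ∈ s, ∀ k ∈ s, i ≠ k → upperExp Ps (fun ω => Z i ω * Z k ω) ≤ 0)
    {σ : ι → ℝ} (hσ : ∀ P ∈ Ps, ∀ k ∈ s, ∫ ω, Z k ω ^ 2 ∂P ≤ σ k) {a : ℝ} (ha : 0 < a) :
    upperCap Ps {ω | a ≤ ∑ k ∈ s, Z k ω} ≤ (∑ k ∈ s, σ k) / a ^ 2 := by
  have hbound : ∀ i k ω, ‖Z i ω * Z k ω‖ ≤ C i * C k := fun i k ω => by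
    rw [Real.norm_eq_abs, abs_mul]
    exact mul_le_mul (hZC i ω) (hZC k ω) (abs_nonneg _) ((abs_nonneg _).trans (hZC i ω))
  have hint : ∀ P ∈ Ps, ∀ i k, Integrable (fun ω => Z i ω * Z k ω) P := fun P hP i k =>
    have := hprob P hP
    .of_bound ((hZ i).mul (hZ k)).aestronglyMeasurable (C i * C k) (.of_forall (hbound i k))
  refine upperCap_le hne fun P hP => ?_
  have := hprob P hP
  refine (measureReal_le_sum_integral_sq_div_sq (fun i _ k _ => hint P hP i k)
    (fun i hi k hk hik => ?_) ha).trans ?_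
  · refine (integral_le_upperExp (c := C i * C k) (fun Q hQ => ?_) hP).trans (hcross i hi k hk hik)
    have := hprob Q hQ
    simpa using (norm_integral_le_of_norm_le_const (.of_forall (hbound i k)) (μ := Q)).trans'
      (le_abs_self _)
  · exact div_le_div_of_nonneg_right (Finset.sum_le_sum fun k hk => hσ P hP k hk) (sq_nonneg a)

end Chebyshev

section SecondMoment

variable {Ω : Type*} [MeasurableSpace Ω]

lemma integral_sq_le_of_measureReal_lt_le {P : Measure Ω} [IsFiniteMeasure P] {f : Ω → ℝ}
    (hf : Measurable f) {c : ℝ} (hfc : ∀ ω, |f ω| ≤ c) {g : ℝ → ℝ}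
    (hg : IntegrableOn (fun t => t * g t) (Ioc 0 c))
    (htail : ∀ t ∈ Ioc 0 c, P.real {ω | t < |f ω|} ≤ g t) :
    ∫ ω, f ω ^ 2 ∂P ≤ 2 * ∫ t in Ioc 0 c, t * g t := by
  have hg0 : ∀ t ∈ Ioc 0 c, 0 ≤ 2 * (t * g t) := fun t ht =>
    mul_nonneg zero_le_two (mul_nonneg ht.1.le (measureReal_nonneg.trans (htail t ht)))
  have hint : Integrable (fun ω => f ω ^ 2) P := by
    refine .of_bound (hf.pow_const 2).aestronglyMeasurable (c ^ 2) (.of_forall fun ω => ?_)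
    rw [Real.norm_eq_abs, abs_pow]
    exact pow_le_pow_left₀ (abs_nonneg _) (hfc ω) 2
  -- layer cake with the weight `2 t`, whose primitive is `t ^ 2`
  have hcake := lintegral_comp_eq_lintegral_meas_lt_mul P (f := fun ω => |f ω|)
    (g := fun t => 2 * t) (.of_forall fun ω => abs_nonneg (f ω)) hf.abs.aemeasurable
    (fun t _ => (continuous_const.mul continuous_id).intervalIntegrable 0 t)
    ((ae_restrict_iff' measurableSet_Ioi).mpr (.of_forall fun t (ht : 0 < t) => by positivity))
  have hprim : ∀ ω, ∫ t in (0)..|f ω|, 2 * t = f ω ^ 2 := fun ω => by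
    rw [intervalIntegral.integral_const_mul, integral_id, sq_abs]
    ring
  simp only [hprim] at hcake
  have hsupp : (Function.support fun t => P {ω | t < |f ω|} * ENNReal.ofReal (2 * t)) ⊆
      Ioc 0 c := by
    intro t ht
    by_contra hnot
    refine ht ?_
    rcases le_or_gt t 0 with h0 | h0
    · simp [ENNReal.ofReal_eq_zero.mpr (by linarith : 2 * t ≤ 0)]
    · have hempty : {ω | t < |f ω|} = ∅ :=
        eq_empty_of_forall_notMem fun ω hω => hnot ⟨h0, hω.out.le.trans (hfc ω)⟩
      simp [hempty]
  rw [← ENNReal.ofReal_le_ofReal_iff (mul_nonneg zero_le_two (setIntegral_nonneg measurableSet_Ioc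
    fun t ht => nonneg_of_mul_nonneg_right (hg0 t ht) zero_lt_two)), ← integral_const_mul,
    ofReal_integral_eq_lintegral_ofReal hint (.of_forall fun ω => sq_nonneg _),
    ofReal_integral_eq_lintegral_ofReal (hg.const_mul 2)
      ((ae_restrict_iff' measurableSet_Ioc).mpr (.of_forall hg0)), hcake]
  calc ∫⁻ t in Ioi 0, P {ω | t < |f ω|} * ENNReal.ofReal (2 * t)
      ≤ ∫⁻ t, P {ω | t < |f ω|} * ENNReal.ofReal (2 * t) := setLIntegral_le_lintegral _ _
    _ = ∫⁻ t in Ioc 0 c, P {ω | t < |f ω|} * ENNReal.ofReal (2 * t) :=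
        (setLIntegral_eq_of_support_subset hsupp).symm
    _ ≤ ∫⁻ t in Ioc 0 c, ENNReal.ofReal (2 * (t * g t)) := by
        refine setLIntegral_mono' measurableSet_Ioc fun t ht => ?_
        rw [← ofReal_measureReal, ← ENNReal.ofReal_mul measureReal_nonneg]
        exact ENNReal.ofReal_le_ofReal (by nlinarith [htail t ht, ht.1])

lemma integral_sq_le_integral_upperCap {Ps : Set (Measure Ω)}
    (hprob : ∀ P ∈ Ps, IsProbabilityMeasure P) {P : Measure Ω} (hP : P ∈ Ps) {f g : Ω → ℝ}
    (hf : Measurable f) {c : ℝ} (hfc : ∀ ω, |f ω| ≤ c) (hfg : ∀ ω, |f ω| ≤ |g ω|) :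
    ∫ ω, f ω ^ 2 ∂P ≤ 2 * ∫ t in Ioc 0 c, t * upperCap Ps {ω | t < |g ω|} := by
  have := hprob P hP
  have hanti : Antitone fun t => upperCap Ps {ω | t < |g ω|} := fun s t hst =>
    upperCap_mono hprob fun ω hω => hst.trans_lt hω
  refine integral_sq_le_of_measureReal_lt_le hf hfc ?_ fun t _ =>
    (measureReal_mono fun ω hω => hω.out.trans_le (hfg ω)).trans (le_upperCap hprob hP _)
  exact (hanti.intervalIntegrable.continuousOn_mul continuousOn_id).def'.mono_set Ioc_subset_uIoc

end SecondMoment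

lemma sum_setIntegral_mul_antitone_le {ι : Type*} {V : ι → ℝ → ℝ} (hV : ∀ k, Antitone (V k))
    (hV0 : ∀ k t, 0 ≤ V k t) (s : Finset ι) {a : ℝ} (ha : 1 ≤ a) :
    ∑ k ∈ s, ∫ t in Ioc 0 (a + 1), t * V k t ≤
      a ^ 2 * ((∫ y in Ioc 0 1, ∑ k ∈ s, y * V k (a * y)) + 2 * ∑ k ∈ s, V k a) := by
  set W : ℝ → ℝ := fun t => ∑ k ∈ s, V k t with hWdef
  have hW : Antitone W := fun x y h => Finset.sum_le_sum fun k _ => hV k h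
  have hW0 : ∀ t, 0 ≤ W t := fun t => Finset.sum_nonneg fun k _ => hV0 k t
  have hint : ∀ b c, IntervalIntegrable (fun t => t * W t) volume b c := fun _ _ =>
    hW.intervalIntegrable.continuousOn_mul continuousOn_id
  have hsum : ∑ k ∈ s, ∫ t in Ioc 0 (a + 1), t * V k t = ∫ t in (0)..(a + 1), t * W t := by
    rw [intervalIntegral.integral_of_le (by linarith), ← integral_finsetSum _ fun k _ =>
      ((hV k).intervalIntegrable.continuousOn_mul (continuousOn_id' _)).def'.mono_set
        Ioc_subset_uIoc]
    simp only [hWdef, Finset.mul_sum]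
  have hscale : ∫ t in (0)..a, t * W t = a ^ 2 * ∫ y in Ioc 0 1, ∑ k ∈ s, y * V k (a * y) := by
    have h := intervalIntegral.integral_comp_mul_left (fun t => t * W t) (a := 0) (b := 1)
      (by positivity : a ≠ 0)
    simp only [mul_zero, mul_one, smul_eq_mul, mul_assoc, intervalIntegral.integral_const_mul] at h
    simp only [← Finset.mul_sum, ← intervalIntegral.integral_of_le zero_le_one]
    rw [sq, mul_assoc, h, ← mul_assoc, mul_inv_cancel₀ (by positivity), one_mul]
  have htop : ∫ t in a..(a + 1), t * W t ≤ a ^ 2 * (2 * ∑ k ∈ s, V k a) := by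
    calc ∫ t in a..(a + 1), t * W t ≤ ∫ _ in a..(a + 1), (a + 1) * W a :=
          intervalIntegral.integral_mono_on (by linarith) (hint _ _) intervalIntegrable_const
            fun t ht => mul_le_mul (by linarith [ht.2]) (hW ht.1) (hW0 t) (by linarith [ht.1])
      _ ≤ a ^ 2 * (2 * W a) := by
          rw [intervalIntegral.integral_const, smul_eq_mul, add_sub_cancel_left, one_mul,
            ← mul_assoc]
          exact mul_le_mul_of_nonneg_right (by nlinarith) (hW0 a)
  rw [hsum, ← intervalIntegral.integral_add_adjacent_intervals (hint 0 a) (hint a (a + 1)),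
    hscale, mul_add]
  exact add_le_add le_rfl htop

lemma tendsto_integral_of_uniformIntegrable {α E : Type*} [MeasurableSpace α] {μ : Measure α}
    [IsFiniteMeasure μ] [NormedAddCommGroup E] [NormedSpace ℝ E] {f : ℕ → α → E} {g : α → E}
    (hf : UniformIntegrable f 1 μ) (hg : MemLp g 1 μ)
    (hfg : ∀ᵐ x ∂μ, Tendsto (fun n => f n x) atTop (𝓝 (g x))) :
    Tendsto (fun n => ∫ x, f n x ∂μ) atTop (𝓝 (∫ x, g x ∂μ)) :=
  tendsto_integral_of_L1' g hg.1 (.of_forall fun n => memLp_one_iff_integrable.mp (hf.memLp n))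
    (tendsto_Lp_finite_of_tendsto_ae le_rfl ENNReal.one_ne_top hf.1 hg hf.2.1 hfg)

lemma abs_mul_cutoff_le_abs {h : ℝ → ℝ} (hh : ∀ x, h x ∈ Icc 0 1) (x : ℝ) :
    |x * h (|x|)| ≤ |x| := by
  rw [abs_mul, abs_of_nonneg (hh _).1]
  exact mul_le_of_le_one_right (abs_nonneg x) (hh _).2

lemma abs_mul_cutoff_le {h : ℝ → ℝ} {c : ℝ} (hh : ∀ x, h x ∈ Icc 0 1)
    (hc : ∀ x, c ≤ |x| → h x = 0) (hc0 : 0 ≤ c) (x : ℝ) : |x * h (|x|)| ≤ c := by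
  rcases le_or_gt c |x| with hx | hx
  · rw [hc |x| (by rwa [abs_abs]), mul_zero, abs_zero]
    exact hc0
  · exact (abs_mul_cutoff_le_abs hh x).trans hx.le

lemma exists_growth_lipschitz_const_sub (c : ℝ) : ∃ C : ℝ, 0 < C ∧ ∃ m : ℕ, ∀ x y : ℝ,
    |(c - x) - (c - y)| ≤ C * (1 + |x| ^ m + |y| ^ m) * |x - y| := by
  refine ⟨1, one_pos, 0, fun x y => ?_⟩
  rw [sub_sub_sub_cancel_left, abs_sub_comm]
  nlinarith [abs_nonneg (x - y)]

lemma integral_const_sub_sq_le {Ω : Type*} [MeasurableSpace Ω] {P : Measure Ω}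
    [IsProbabilityMeasure P] {f : Ω → ℝ} (hf : MemLp f 2 P) (m : ℝ) :
    ∫ ω, (m - f ω) ^ 2 ∂P ≤ 2 * m ^ 2 + 2 * ∫ ω, f ω ^ 2 ∂P := by
  have hf2 : Integrable (fun ω => f ω ^ 2) P := hf.integrable_sq
  calc ∫ ω, (m - f ω) ^ 2 ∂P ≤ ∫ ω, (2 * m ^ 2 + 2 * f ω ^ 2) ∂P := by
        refine integral_mono ((memLp_const m).sub hf).integrable_sq
          ((integrable_const _).add (hf2.const_mul 2)) fun ω => ?_
        nlinarith [sq_nonneg (m + f ω)]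
    _ = 2 * m ^ 2 + 2 * ∫ ω, f ω ^ 2 ∂P := by
        rw [integral_add (integrable_const _) (hf2.const_mul 2), integral_const,
          integral_const_mul, probReal_univ, one_smul]

lemma setOf_sum_le_sub_subset {Ω ι : Type*} {s : Finset ι} {X Y : ι → Ω → ℝ} {μ : ι → ℝ}
    {r a : ℝ} (hYr : ∀ k ω, |X k ω| ≤ r → Y k ω = X k ω) :
    {ω | ∑ k ∈ s, X k ω ≤ ∑ k ∈ s, μ k - a} ⊆
      {ω | a ≤ ∑ k ∈ s, (μ k - Y k ω)} ∪ ⋃ k ∈ s, {ω | r < |X k ω|} := by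
  intro ω (hω : ∑ k ∈ s, X k ω ≤ ∑ k ∈ s, μ k - a)
  by_cases hbig : ∃ k ∈ s, r < |X k ω|
  · obtain ⟨k, hk, hr⟩ := hbig
    exact Or.inr (mem_biUnion hk hr)
  · push Not at hbig
    have hsumYX : ∑ k ∈ s, Y k ω = ∑ k ∈ s, X k ω :=
      Finset.sum_congr rfl fun k hk => hYr k ω (hbig k hk)
    refine Or.inl (show a ≤ _ from ?_)
    rw [Finset.sum_sub_distrib, hsumYX]
    linarith

section Truncation

variable {Ω ι : Type*} [MeasurableSpace Ω] {Ps : Set (Measure Ω)}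

theorem upperCap_sum_le_sum_lowerExp_sub_le (hne : Ps.Nonempty)
    (hprob : ∀ P ∈ Ps, IsProbabilityMeasure P) {s : Finset ι} {X Y : ι → Ω → ℝ} {r c a : ℝ}
    (hY : ∀ k, Measurable (Y k)) (hYc : ∀ k ω, |Y k ω| ≤ c) (hYX : ∀ k ω, |Y k ω| ≤ |X k ω|)
    (hYr : ∀ k ω, |X k ω| ≤ r → Y k ω = X k ω)
    (hindep : ∀ i ∈ s, ∀ k ∈ s, i ≠ k →
      upperExp Ps (fun ω => (lowerExp Ps (Y i) - Y i ω) * (lowerExp Ps (Y k) - Y k ω)) =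
        upperExp Ps (fun ω => lowerExp Ps (Y i) - Y i ω) *
          upperExp Ps (fun ω => lowerExp Ps (Y k) - Y k ω))
    (ha : 0 < a) :
    upperCap Ps {ω | ∑ k ∈ s, X k ω ≤ ∑ k ∈ s, lowerExp Ps (Y k) - a} ≤
      8 * (∑ k ∈ s, ∫ t in Ioc 0 c, t * upperCap Ps {ω | t < |X k ω|}) / a ^ 2 +
        ∑ k ∈ s, upperCap Ps {ω | r < |X k ω|} := by
  set μ : ι → ℝ := fun k => lowerExp Ps (Y k)
  set σ : ι → ℝ := fun k => 2 * ∫ t in Ioc 0 c, t * upperCap Ps {ω | t < |X k ω|} with hσdef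
  have hL2 : ∀ P ∈ Ps, ∀ k, MemLp (Y k) 2 P := fun P hP k =>
    have := hprob P hP
    .of_bound (hY k).aestronglyMeasurable c (.of_forall (hYc k))
  have hσ : ∀ P ∈ Ps, ∀ k, ∫ ω, Y k ω ^ 2 ∂P ≤ σ k := fun P hP k =>
    integral_sq_le_integral_upperCap hprob hP (hY k) (hYc k) (hYX k)
  have hμσ : ∀ k, μ k ^ 2 ≤ σ k := fun k => sq_lowerExp_le hne hprob (hL2 · · k) (hσ · · k)
  have hcentered : ∀ k, upperExp Ps (fun ω => μ k - Y k ω) = 0 := by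
    intro k
    have hlow : ∀ P ∈ Ps, -c ≤ ∫ ω, Y k ω ∂P := fun P hP => by
      have := hprob P hP
      refine neg_le_of_abs_le ?_
      simpa using norm_integral_le_of_norm_le_const (f := Y k) (μ := P) (.of_forall (hYc k))
    have hL1 : ∀ P ∈ Ps, Integrable (Y k) P := fun P hP =>
      have := hprob P hP
      (hL2 P hP k).integrable one_le_two
    rw [upperExp_const_sub hne hprob hL1 hlow, sub_self]
  have hvar : ∀ P ∈ Ps, ∀ k ∈ s, ∫ ω, (μ k - Y k ω) ^ 2 ∂P ≤ 4 * σ k := fun P hP k _ =>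
    have := hprob P hP
    (integral_const_sub_sq_le (hL2 P hP k) (μ k)).trans (by linarith [hμσ k, hσ P hP k])
  have hcheb := upperCap_le_sum_div_sq hne hprob (s := s) (Z := fun k ω => μ k - Y k ω)
    (fun k => measurable_const.sub (hY k))
    (fun k ω => (abs_sub _ _).trans (add_le_add le_rfl (hYc k ω)))
    (fun i hi k hk hik => by rw [hindep i hi k hk hik, hcentered i, zero_mul]) hvar ha
  refine (upperCap_le_add_sum hprob (setOf_sum_le_sub_subset hYr)).trans
    (add_le_add (hcheb.trans_eq ?_) le_rfl)
  simp only [hσdef, ← Finset.mul_sum]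
  ring

theorem upperCap_mean_le_lowerMean_sub_le (hne : Ps.Nonempty)
    (hprob : ∀ P ∈ Ps, IsProbabilityMeasure P) {s : Finset ι} {X Y : ι → Ω → ℝ} {r ε : ℝ}
    (hr : 1 ≤ r) (hε : 0 < ε) (hY : ∀ k, Measurable (Y k)) (hYc : ∀ k ω, |Y k ω| ≤ r + 1)
    (hYX : ∀ k ω, |Y k ω| ≤ |X k ω|) (hYr : ∀ k ω, |X k ω| ≤ r → Y k ω = X k ω)
    (hindep : ∀ i ∈ s, ∀ k ∈ s, i ≠ k →
      upperExp Ps (fun ω => (lowerExp Ps (Y i) - Y i ω) * (lowerExp Ps (Y k) - Y k ω)) =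
        upperExp Ps (fun ω => lowerExp Ps (Y i) - Y i ω) *
          upperExp Ps (fun ω => lowerExp Ps (Y k) - Y k ω)) :
    upperCap Ps {ω | (∑ k ∈ s, X k ω) / r ≤ 1 / r * ∑ k ∈ s, lowerExp Ps (Y k) - ε} ≤
      8 / ε ^ 2 * ((∫ y in Ioc 0 1, ∑ k ∈ s, y * upperCap Ps {ω | r * y < |X k ω|}) +
        2 * ∑ k ∈ s, upperCap Ps {ω | r < |X k ω|}) + ∑ k ∈ s, upperCap Ps {ω | r < |X k ω|} := by
  have hr0 : 0 < r := by linarith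
  have hevent : {ω | (∑ k ∈ s, X k ω) / r ≤ 1 / r * ∑ k ∈ s, lowerExp Ps (Y k) - ε} =
      {ω | ∑ k ∈ s, X k ω ≤ ∑ k ∈ s, lowerExp Ps (Y k) - r * ε} := by
    ext ω
    simp only [mem_ofPred_eq, div_le_iff₀ hr0, sub_mul, mul_comm ε]
    rw [mul_comm, ← mul_assoc, mul_one_div_cancel hr0.ne', one_mul]
  have htail := sum_setIntegral_mul_antitone_le (V := fun k t => upperCap Ps {ω | t < |X k ω|})
    (fun k _ _ hst => upperCap_mono hprob fun ω hω => hst.trans_lt hω)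
    (fun k t => upperCap_nonneg _) s hr
  rw [hevent]
  refine (upperCap_sum_le_sum_lowerExp_sub_le hne hprob hY hYc hYX hYr hindep
    (mul_pos hr0 hε)).trans (add_le_add_left ?_ _)
  calc _ ≤ 8 * (r ^ 2 * ((∫ y in Ioc 0 1, ∑ k ∈ s, y * upperCap Ps {ω | r * y < |X k ω|}) +
        2 * ∑ k ∈ s, upperCap Ps {ω | r < |X k ω|})) / (r * ε) ^ 2 := by gcongr
    _ = _ := by field_simp

end Truncation

/-- nonlinear Kolmogorov WLLN, lower bound: under the standing
assumptions and pairwise nonlinear independence of the truncated variables,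
for every ε > 0, V(Sₙ/n ≤ μ̲ₙ − ε) → 0. -/
theorem nonlinear_wlln_lower
    {Ω : Type*} [MeasurableSpace Ω] (Ps : Set (Measure Ω)) (hne : Ps.Nonempty)
    (hprob : ∀ P ∈ Ps, IsProbabilityMeasure P)
    (X : ℕ → Ω → ℝ) (hX : ∀ k, Measurable (X k))
    (χ : ℕ → ℝ → ℝ)
    (hχLip : ∀ n, ∃ K : NNReal, LipschitzWith K (χ n))
    (hχone : ∀ n : ℕ, ∀ x : ℝ, |x| ≤ (n : ℝ) → χ n x = 1)
    (hχzero : ∀ n : ℕ, ∀ x : ℝ, (n : ℝ) + 1 ≤ |x| → χ n x = 0)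
    (hχrange : ∀ n : ℕ, ∀ x : ℝ, χ n x ∈ Set.Icc (0 : ℝ) 1)
    (Y : ℕ → ℕ → Ω → ℝ) (hY : ∀ n k, Y n k = fun ω => X k ω * χ n |X k ω|)
    (S : ℕ → Ω → ℝ) (hS : ∀ n, S n = fun ω => ∑ k ∈ Finset.Icc 1 n, X k ω)
    (ψ : ℕ → ℝ → ℝ)
    (hψ : ∀ n : ℕ, ∀ y : ℝ, ψ n y = ∑ k ∈ Finset.Icc 1 n, y * upperCap Ps {ω | (n : ℝ) * y < |X k ω|})
    (hψ0 : ∀ y ∈ Set.Icc (0 : ℝ) 1, Tendsto (fun n => ψ n y) atTop (nhds 0))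
    (hUI : UniformIntegrable (fun n : ℕ => ψ n) 1 (volume.restrict (Set.Icc (0 : ℝ) 1)))
    (μm : ℕ → ℕ → ℝ) (hμm : ∀ n k, μm n k = lowerExp Ps (Y n k))
    (μlow : ℕ → ℝ) (hμlow : ∀ n : ℕ, μlow n = (1 / (n : ℝ)) * ∑ k ∈ Finset.Icc 1 n, μm n k)
    (hindep : ∀ n : ℕ, ∀ i ∈ Finset.Icc 1 n, ∀ k ∈ Finset.Icc 1 n, i ≠ k →
      ∀ φ₁ φ₂ : ℝ → ℝ,
      (∃ C : ℝ, 0 < C ∧ ∃ m : ℕ, ∀ x y : ℝ,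
        |φ₁ x - φ₁ y| ≤ C * (1 + |x| ^ m + |y| ^ m) * |x - y|) →
      (∃ C : ℝ, 0 < C ∧ ∃ m : ℕ, ∀ x y : ℝ,
        |φ₂ x - φ₂ y| ≤ C * (1 + |x| ^ m + |y| ^ m) * |x - y|) →
      upperExp Ps (fun ω => φ₁ (Y n k ω) * φ₂ (Y n i ω)) =
        upperExp Ps (fun ω => φ₁ (Y n k ω)) * upperExp Ps (fun ω => φ₂ (Y n i ω)))
    :
    ∀ ε : ℝ, 0 < ε →
      Tendsto (fun n => upperCap Ps {ω | S n ω / n ≤ μlow n - ε}) atTop (nhds 0) := by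
  intro ε hε
  have key : ∀ n : ℕ, 1 ≤ n → upperCap Ps {ω | S n ω / n ≤ μlow n - ε} ≤
      8 / ε ^ 2 * ((∫ y in Ioc 0 1, ψ n y) + 2 * ψ n 1) + ψ n 1 := by
    intro n hn
    have hχc : Continuous (χ n) := (hχLip n).choose_spec.continuous
    have hψ1 : ψ n 1 = ∑ k ∈ Finset.Icc 1 n, upperCap Ps {ω | n < |X k ω|} := by simp [hψ]
    simp only [hS, hμlow, hμm, hψ1]
    simpa only [← hψ] using upperCap_mean_le_lowerMean_sub_le hne hprob (X := X) (Y := Y n)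
      (Nat.one_le_cast.mpr hn) hε
      (fun k => by rw [hY]; exact (hX k).mul (hχc.measurable.comp (hX k).abs))
      (fun k ω => by rw [hY]; exact abs_mul_cutoff_le (hχrange n) (hχzero n) (by positivity) _)
      (fun k ω => by rw [hY]; exact abs_mul_cutoff_le_abs (hχrange n) _)
      (fun k ω h => by rw [hY]; simp only [hχone n _ (by rwa [abs_abs]), mul_one])
      (fun i hi k hk hik => hindep n k hk i hi hik.symm (fun x => lowerExp Ps (Y n i) - x)
        (fun x => lowerExp Ps (Y n k) - x) (exists_growth_lipschitz_const_sub _)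
        (exists_growth_lipschitz_const_sub _))
  have hψintlim : Tendsto (fun n => ∫ y in Ioc 0 1, ψ n y) atTop (𝓝 0) := by
    have := tendsto_integral_of_uniformIntegrable hUI MemLp.zero'
      ((ae_restrict_iff' measurableSet_Icc).mpr (.of_forall hψ0))
    simpa only [integral_Icc_eq_integral_Ioc, integral_zero] using this
  have hψ1lim := hψ0 1 ⟨zero_le_one, le_rfl⟩
  have hbound := ((hψintlim.add (hψ1lim.const_mul 2)).const_mul (8 / ε ^ 2)).add hψ1lim
  simp only [mul_zero, add_zero] at hbound
  exact squeeze_zero' (.of_forall fun n => upperCap_nonneg _) ((eventually_ge_atTop 1).mono key)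
    hbound
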